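/- Let c = (n, 0, 1, ..., n-1) ∈ S_{n+1} in one-line notation (an (n+1)-cycle, a Coxeter element). Then the Bruhat interval [id, c] is isomorphic as a poset to the Boolean lattice of subsets of an n-element set. -/

import Mathlib

open Polynomial

/-- Number of inversions (the Coxeter length) of a permutation of `Fin n`. -/
def invCount {n : ℕ} (x : Equiv.Perm (Fin n)) : ℕ :=
  (Finset.univ.filter (fun p : Fin n × Fin n => p.1 < p.2 ∧ x p.2 < x p.1)).card

/-- Bruhat order on the symmetric group `S_n = Perm (Fin n)`: `x ≤ y` iff there is an
upward path from `x` to `y` in the Bruhat graph (edges: multiplication by a transposition,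
oriented by increasing length). -/
def BruhatLE {n : ℕ} (x y : Equiv.Perm (Fin n)) : Prop :=
  Relation.ReflTransGen
    (fun u v => (∃ i j : Fin n, i ≠ j ∧ v = Equiv.swap i j * u) ∧ invCount u < invCount v)
    x y

def BruhatLT {n : ℕ} (x y : Equiv.Perm (Fin n)) : Prop :=
  BruhatLE x y ∧ x ≠ y

/-!
For `A ⊆ {0, …, n-1}` let `z_A` be the Coxeter element of the parabolic subgroup generated by the
simple transpositions `(a a+1)`, `a ∈ A`; then `z_∅ = id` and `z_{0,…,n-1} = c`. Adding `a ∉ A`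
multiplies `z_A` on the right by a transposition of a non-inversion, which raises the inversion
number, so `A ⊆ B` gives `z_A ≤ z_B`. Conversely, swapping the entries of a non-inversion never
lowers the inversion number, so every Bruhat step down from `z_A` undoes an inversion of `z_A`;
these are the pairs (start of the block of `a + 1`, `a + 1`) for `a ∈ A`, and undoing one gives
`z_{A \ {a}}`. Hence `[id, z_A] = {z_B | B ⊆ A}`.
-/

open Equiv

theorem invCount_mul_swap_lt {N : ℕ} (w : Perm (Fin N)) {i j : Fin N} (hij : i < j)
    (hw : w j < w i) : invCount (w * swap i j) < invCount w := by
  set σ := swap i j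
  have hσ (k : Fin N) : (i < σ k ∧ σ k < j) ↔ (i < k ∧ k < j) := by
    simp only [σ, swap_apply_def]; grind
  -- an involution carrying the inversions of `w * σ` to inversions of `w` other than `(i, j)`
  let ψ : Fin N × Fin N → Fin N × Fin N := fun p =>
    if (i < p.1 ∧ p.1 < j) ∨ (i < p.2 ∧ p.2 < j) then p else (σ p.1, σ p.2)
  have hψ : Function.Involutive ψ := by
    intro p
    by_cases hp : (i < p.1 ∧ p.1 < j) ∨ (i < p.2 ∧ p.2 < j) <;>
      simp [ψ, hp, hσ, σ]
  refine lt_of_le_of_lt (Finset.card_le_card_of_injOn ψ ?_ hψ.injective.injOn)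
    (Finset.card_erase_lt_of_mem (a := (i, j)) (by simpa using ⟨hij, hw⟩))
  rintro ⟨p, q⟩ hpq
  simp only [Finset.coe_erase, Finset.coe_filter, Finset.mem_univ, true_and, Set.mem_sdiff,
    Set.mem_ofPred_eq, Set.mem_singleton_iff, ψ, σ, swap_apply_def, Perm.mul_apply] at hpq ⊢
  grind

theorem invCount_lt_invCount_mul_swap {N : ℕ} (w : Perm (Fin N)) {i j : Fin N} (hij : i < j)
    (hw : w i < w j) : invCount w < invCount (w * swap i j) := by
  simpa [mul_assoc] using invCount_mul_swap_lt (w * swap i j) hij (by simpa using hw)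

theorem BruhatLE.mul_swap {N : ℕ} {w : Perm (Fin N)} {i j : Fin N} (hij : i < j)
    (hw : w i < w j) : BruhatLE w (w * swap i j) :=
  .single ⟨⟨w i, w j, hw.ne, mul_swap_eq_swap_mul w i j⟩, invCount_lt_invCount_mul_swap w hij hw⟩

theorem exists_inversion_of_invCount_mul_swap_lt {N : ℕ} {w : Perm (Fin N)} {i j : Fin N}
    (hij : i ≠ j) (h : invCount (w * swap i j) < invCount w) :
    ∃ p q, p < q ∧ w q < w p ∧ swap i j = swap p q := by
  have key {p q : Fin N} (hpq : p < q) (h : invCount (w * swap p q) < invCount w) : w q < w p :=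
    (lt_or_gt_of_ne (w.injective.ne hpq.ne')).resolve_right
      fun hw => (invCount_lt_invCount_mul_swap w hpq hw).not_gt h
  rcases lt_or_gt_of_ne hij with hij | hji
  · exact ⟨i, j, hij, key hij h, rfl⟩
  · rw [swap_comm] at h ⊢
    exact ⟨j, i, hji, key hji h, rfl⟩

theorem val_mul_swap_apply {N : ℕ} {w : Perm (Fin N)} {i j k : Fin N} :
    ((w * swap i j) k : ℕ) = swap (w i : ℕ) (w j) (w k) := by
  rw [mul_swap_eq_swap_mul, Perm.mul_apply, Fin.val_injective.swap_apply]

namespace Finset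

def nextGap (S : Finset ℕ) (i : ℕ) : ℕ :=
  Nat.find (p := fun j => i ≤ j ∧ j ∉ S) <| by
    obtain ⟨j, hj⟩ := Infinite.exists_notMem_finset (S ∪ range i)
    exact ⟨j, by simp_all⟩

variable {S : Finset ℕ} {i j k a : ℕ}

theorem le_nextGap : i ≤ S.nextGap i := (Nat.find_spec (p := fun j => i ≤ j ∧ j ∉ S) _).1

theorem nextGap_notMem : S.nextGap i ∉ S := (Nat.find_spec (p := fun j => i ≤ j ∧ j ∉ S) _).2

theorem mem_of_le_of_lt_nextGap (hik : i ≤ k) (hk : k < S.nextGap i) : k ∈ S := by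
  by_contra h
  exact Nat.find_min (p := fun j => i ≤ j ∧ j ∉ S) _ hk ⟨hik, h⟩

theorem nextGap_le (hij : i ≤ j) (hj : j ∉ S) : S.nextGap i ≤ j :=
  Nat.find_min' (p := fun j => i ≤ j ∧ j ∉ S) _ ⟨hij, hj⟩

theorem nextGap_eq_iff :
    S.nextGap i = j ↔ i ≤ j ∧ j ∉ S ∧ ∀ k, i ≤ k → k < j → k ∈ S := by
  refine ⟨?_, fun ⟨hij, hj, hS⟩ => (nextGap_le hij hj).antisymm ?_⟩
  · rintro rfl
    exact ⟨le_nextGap, nextGap_notMem, fun k => mem_of_le_of_lt_nextGap⟩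
  · by_contra! h
    exact nextGap_notMem (hS _ le_nextGap h)

theorem nextGap_mono (hij : i ≤ j) : S.nextGap i ≤ S.nextGap j :=
  nextGap_le (hij.trans le_nextGap) nextGap_notMem

theorem nextGap_eq_of_le_nextGap (hij : i ≤ j) (hj : j ≤ S.nextGap i) :
    S.nextGap j = S.nextGap i :=
  nextGap_eq_iff.2 ⟨hj, nextGap_notMem, fun _ hk => mem_of_le_of_lt_nextGap (hij.trans hk)⟩

theorem nextGap_le_of_forall_lt {n : ℕ} (hS : ∀ k ∈ S, k < n) (hi : i ≤ n) : S.nextGap i ≤ n :=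
  nextGap_le hi fun h => (hS n h).false

@[simp] theorem nextGap_empty : (∅ : Finset ℕ).nextGap i = i :=
  nextGap_eq_iff.2 ⟨le_rfl, notMem_empty i, fun _ h h' => (h.not_gt h').elim⟩

theorem nextGap_insert :
    (insert a S).nextGap i = if S.nextGap i = a then S.nextGap (a + 1) else S.nextGap i := by
  have hi : i ≤ S.nextGap i := le_nextGap
  split_ifs with h
  · have ha : a + 1 ≤ S.nextGap (a + 1) := le_nextGap
    refine nextGap_eq_iff.2 ⟨by omega, by simp [nextGap_notMem]; omega, fun k hik hk => ?_⟩
    rcases lt_trichotomy k a with hka | rfl | hka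
    · exact mem_insert_of_mem (mem_of_le_of_lt_nextGap hik (h ▸ hka))
    · exact mem_insert_self k S
    · exact mem_insert_of_mem (mem_of_le_of_lt_nextGap hka hk)
  · exact nextGap_eq_iff.2 ⟨hi, by simp [nextGap_notMem, h],
      fun k hik hk => mem_insert_of_mem (mem_of_le_of_lt_nextGap hik hk)⟩

theorem nextGap_insert_succ : (insert a S).nextGap (a + 1) = S.nextGap (a + 1) := by
  have : a + 1 ≤ S.nextGap (a + 1) := le_nextGap
  rw [nextGap_insert, if_neg (by omega)]

theorem nextGap_ne_nextGap_succ (ha : a ∉ S) (hi : ∀ k, k + 1 = i → k ∉ S) (hia : i ≠ a + 1) :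
    S.nextGap i ≠ S.nextGap (a + 1) := by
  intro h
  rcases le_or_gt i a with hia' | hai
  · exact ha (mem_of_le_of_lt_nextGap hia' (h ▸ le_nextGap))
  · obtain ⟨k, rfl⟩ : ∃ k, k + 1 = i := ⟨i - 1, by omega⟩
    exact hi k rfl (mem_of_le_of_lt_nextGap (by omega) (h ▸ le_nextGap))

/-- On each maximal block `[r, s]` with `[r, s) ⊆ S` and `s ∉ S`, this sends `r ↦ s` and
`k ↦ k - 1` for `r < k ≤ s`. -/
def blockRotate (S : Finset ℕ) : ℕ → ℕ
  | 0 => S.nextGap 0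
  | k + 1 => if k ∈ S then k else S.nextGap (k + 1)

theorem blockRotate_succ_of_mem (h : k ∈ S) : S.blockRotate (k + 1) = k := by
  simp [blockRotate, h]

theorem blockRotate_eq_nextGap (hi : ∀ k, k + 1 = i → k ∉ S) : S.blockRotate i = S.nextGap i := by
  cases i with
  | zero => rfl
  | succ k => simp [blockRotate, hi k rfl]

theorem blockRotate_cases (S : Finset ℕ) (i : ℕ) :
    (∃ k ∈ S, k + 1 = i ∧ S.blockRotate i = k) ∨
      ((∀ k, k + 1 = i → k ∉ S) ∧ S.blockRotate i = S.nextGap i) := by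
  by_cases h : ∃ k ∈ S, k + 1 = i
  · obtain ⟨k, hk, rfl⟩ := h
    exact .inl ⟨k, hk, rfl, blockRotate_succ_of_mem hk⟩
  · have hi : ∀ k, k + 1 = i → k ∉ S := fun k hk hkS => h ⟨k, hkS, hk⟩
    exact .inr ⟨hi, blockRotate_eq_nextGap hi⟩

theorem le_blockRotate_add_one : i ≤ S.blockRotate i + 1 := by
  rcases S.blockRotate_cases i with ⟨k, -, rfl, h⟩ | ⟨-, h⟩
  · omega
  · exact h ▸ le_nextGap.trans (Nat.le_succ _)

theorem le_blockRotate_of_notMem (h : S.blockRotate i ∉ S) : i ≤ S.blockRotate i := by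
  rcases S.blockRotate_cases i with ⟨k, hk, -, hki⟩ | ⟨-, hi⟩
  · exact (h (hki ▸ hk)).elim
  · exact hi ▸ le_nextGap

theorem blockRotate_succ_eq_self_iff : S.blockRotate (k + 1) = k ↔ k ∈ S := by
  refine ⟨fun h => ?_, blockRotate_succ_of_mem⟩
  by_contra hk
  have := le_blockRotate_of_notMem (S := S) (i := k + 1) (by rwa [h])
  omega

theorem blockRotate_le {n : ℕ} (hS : ∀ k ∈ S, k < n) (hi : i ≤ n) : S.blockRotate i ≤ n := by
  rcases S.blockRotate_cases i with ⟨k, -, rfl, h⟩ | ⟨-, h⟩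
  · omega
  · exact h ▸ nextGap_le_of_forall_lt hS hi

@[simp] theorem blockRotate_empty : (∅ : Finset ℕ).blockRotate i = i := by
  rw [blockRotate_eq_nextGap (by simp), nextGap_empty]

theorem blockRotate_injective : Function.Injective S.blockRotate := by
  have starts {i j : ℕ} (hi : ∀ k, k + 1 = i → k ∉ S) (h : S.nextGap i = S.nextGap j) :
      i ≤ j := by
    by_contra! hji
    have : i ≤ S.nextGap j := h ▸ le_nextGap
    exact hi (i - 1) (by omega) (mem_of_le_of_lt_nextGap (i := j) (by omega) (by omega))
  intro i j h
  rcases S.blockRotate_cases i with ⟨k, hk, rfl, hi⟩ | ⟨hi, hi'⟩ <;>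
    rcases S.blockRotate_cases j with ⟨l, hl, rfl, hj⟩ | ⟨hj, hj'⟩
  · omega
  · exact (nextGap_notMem (S := S) (i := j) (by rwa [← hj', ← h, hi])).elim
  · exact (nextGap_notMem (S := S) (i := i) (by rwa [← hi', h, hj])).elim
  · rw [hi', hj'] at h
    exact (starts hi h).antisymm (starts hj h.symm)

theorem blockRotate_insert (ha : a ∉ S) (i : ℕ) :
    (insert a S).blockRotate i = swap a (S.nextGap (a + 1)) (S.blockRotate i) := by
  have hae : a ≠ S.nextGap (a + 1) := (Nat.lt_of_succ_le le_nextGap).ne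
  rcases (insert a S).blockRotate_cases i with ⟨k, hk, rfl, hi⟩ | ⟨hi, hi'⟩
  · rw [hi]
    rcases mem_insert.1 hk with rfl | hkS
    · rw [blockRotate_eq_nextGap (by simpa using ha), swap_apply_right]
    · rw [blockRotate_succ_of_mem hkS, swap_apply_of_ne_of_ne (by rintro rfl; exact ha hkS)
        (by rintro rfl; exact nextGap_notMem hkS)]
  · have hiS : ∀ k, k + 1 = i → k ∉ S := fun k hk hkS => hi k hk (mem_insert_of_mem hkS)
    rw [hi', blockRotate_eq_nextGap hiS, nextGap_insert]
    split_ifs with h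
    · rw [h, swap_apply_left]
    · exact (swap_apply_of_ne_of_ne h (nextGap_ne_nextGap_succ ha hiS
        (by rintro rfl; exact hi a rfl (mem_insert_self a S)))).symm

theorem blockRotate_erase (ha : a ∈ S) (i : ℕ) :
    (S.erase a).blockRotate i = swap a (S.nextGap (a + 1)) (S.blockRotate i) := by
  conv_rhs => rw [← insert_erase ha, blockRotate_insert (notMem_erase a S), nextGap_insert_succ,
    swap_apply_self]

theorem exists_of_blockRotate_lt {p q : ℕ} (hqp : q < p) (h : S.blockRotate p < S.blockRotate q) :
    ∃ a ∈ S, a + 1 = p ∧ S.blockRotate p = a ∧ S.blockRotate q = S.nextGap p := by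
  rcases S.blockRotate_cases q with ⟨k, -, rfl, hq⟩ | ⟨-, hq⟩
  · have := le_blockRotate_add_one (S := S) (i := p)
    omega
  rcases S.blockRotate_cases p with ⟨a, ha, rfl, hp⟩ | ⟨-, hp⟩
  · refine ⟨a, ha, rfl, hp, ?_⟩
    rw [hq, nextGap_eq_of_le_nextGap hqp.le (by omega)]
  · have := nextGap_mono (S := S) hqp.le
    omega

end Finset

open Finset

section ParabolicCoxeter

variable {n : ℕ} {A B : Finset (Fin n)}

theorem blockRotate_map_val_lt (A : Finset (Fin n)) {i : ℕ} (hi : i < n + 1) :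
    (A.map Fin.valEmbedding).blockRotate i < n + 1 :=
  Nat.lt_succ_of_le (blockRotate_le (by simp) (Nat.le_of_lt_succ hi))

/-- The product `⋯ (a₂ a₂+1) (a₁ a₁+1)` over `a₁ < a₂ < ⋯` in `A`: the Coxeter element of the
parabolic subgroup generated by the simple transpositions `(a a+1)`, `a ∈ A`. -/
noncomputable def parabolicCoxeter (A : Finset (Fin n)) : Perm (Fin (n + 1)) :=
  ofBijective (fun i => ⟨(A.map Fin.valEmbedding).blockRotate i, blockRotate_map_val_lt A i.2⟩)
    (Finite.injective_iff_bijective.1 fun _ _ h =>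
      Fin.ext (blockRotate_injective (Fin.mk.inj_iff.1 h)))

theorem val_parabolicCoxeter_apply (A : Finset (Fin n)) (i : Fin (n + 1)) :
    (parabolicCoxeter A i : ℕ) = (A.map Fin.valEmbedding).blockRotate i := rfl

@[simp] theorem parabolicCoxeter_empty : parabolicCoxeter (∅ : Finset (Fin n)) = 1 := by
  ext i
  simp [val_parabolicCoxeter_apply]

theorem parabolicCoxeter_injective : Function.Injective (parabolicCoxeter (n := n)) := by
  intro A B h
  ext a
  have := congrArg (fun w => (w a.succ : ℕ)) h
  simp only [val_parabolicCoxeter_apply, Fin.val_succ] at this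
  rw [← mem_map' Fin.valEmbedding, ← mem_map' Fin.valEmbedding, Fin.valEmbedding_apply,
    ← blockRotate_succ_eq_self_iff, ← blockRotate_succ_eq_self_iff, this]

theorem exists_parabolicCoxeter_insert {a : Fin n} (ha : a ∉ A) :
    ∃ i j, i < j ∧ parabolicCoxeter A i < parabolicCoxeter A j ∧
      parabolicCoxeter (insert a A) = parabolicCoxeter A * swap i j := by
  set S := A.map Fin.valEmbedding
  have haS : (a : ℕ) ∉ S := (mem_map' Fin.valEmbedding).not.2 ha
  set i := (parabolicCoxeter A).symm a.castSucc
  have hi : (parabolicCoxeter A i : ℕ) = a := by simp [i]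
  have hj : (parabolicCoxeter A a.succ : ℕ) = S.nextGap (a + 1) := by
    rw [val_parabolicCoxeter_apply, Fin.val_succ,
      blockRotate_eq_nextGap fun k hk => Nat.succ_injective hk ▸ haS]
  have ha_lt : (a : ℕ) < S.nextGap (a + 1) := le_nextGap
  refine ⟨i, a.succ, ?_, by simp [Fin.lt_def, hi, hj, ha_lt], ?_⟩
  · have := le_blockRotate_of_notMem (S := S) (i := i) (by rwa [← val_parabolicCoxeter_apply, hi])
    simp only [Fin.lt_def, Fin.val_succ]
    rw [← val_parabolicCoxeter_apply, hi] at this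
    omega
  · ext k
    rw [val_mul_swap_apply, hi, hj, val_parabolicCoxeter_apply, map_insert, Fin.valEmbedding_apply,
      blockRotate_insert haS, val_parabolicCoxeter_apply]

theorem exists_parabolicCoxeter_erase_of_lt {p q : Fin (n + 1)} (hqp : q < p)
    (h : parabolicCoxeter A p < parabolicCoxeter A q) :
    ∃ a ∈ A, parabolicCoxeter A * swap q p = parabolicCoxeter (A.erase a) := by
  obtain ⟨a', ha', hap, hp, hq⟩ := exists_of_blockRotate_lt hqp h
  obtain ⟨a, ha, rfl⟩ := mem_map.1 ha'
  refine ⟨a, ha, ?_⟩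
  ext k
  simp only [val_mul_swap_apply, val_parabolicCoxeter_apply, map_erase]
  rw [blockRotate_erase ha', hq, hp, ← hap, swap_comm]

theorem bruhatLE_parabolicCoxeter_of_subset (h : A ⊆ B) :
    BruhatLE (parabolicCoxeter A) (parabolicCoxeter B) := by
  obtain ⟨s, rfl⟩ : ∃ s, B = A ∪ s := ⟨B, (union_eq_right.2 h).symm⟩
  clear h
  induction s using Finset.induction_on with
  | empty => simpa using .refl
  | insert b s _ ih =>
    rw [union_insert]
    by_cases hb : b ∈ A ∪ s
    · rwa [insert_eq_of_mem hb]
    · obtain ⟨i, j, hij, hw, heq⟩ := exists_parabolicCoxeter_insert hb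
      exact ih.trans (heq ▸ BruhatLE.mul_swap hij hw)

theorem exists_parabolicCoxeter_erase_of_swap_mul {u : Perm (Fin (n + 1))} {x y : Fin (n + 1)}
    (hxy : x ≠ y) (hu : parabolicCoxeter A = swap x y * u)
    (hlt : invCount u < invCount (parabolicCoxeter A)) :
    ∃ a ∈ A, u = parabolicCoxeter (A.erase a) := by
  set w := parabolicCoxeter A
  have hu' : u = w * swap (w.symm x) (w.symm y) := by
    rw [mul_swap_eq_swap_mul, apply_symm_apply, apply_symm_apply, hu, ← mul_assoc,
      swap_mul_self, one_mul]
  rw [hu'] at hlt ⊢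
  obtain ⟨q, p, hqp, hw, hs⟩ :=
    exists_inversion_of_invCount_mul_swap_lt (w.symm.injective.ne hxy) hlt
  rw [hs]
  exact exists_parabolicCoxeter_erase_of_lt hqp hw

theorem exists_subset_of_bruhatLE_parabolicCoxeter {u : Perm (Fin (n + 1))}
    (h : BruhatLE u (parabolicCoxeter A)) : ∃ B ⊆ A, u = parabolicCoxeter B := by
  induction h using Relation.ReflTransGen.head_induction_on with
  | refl => exact ⟨A, subset_rfl, rfl⟩
  | head hedge _ ih =>
    obtain ⟨B, hBA, hB⟩ := ih
    obtain ⟨⟨x, y, hxy, hv⟩, hlt⟩ := hedge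
    rw [hB] at hv hlt
    obtain ⟨a, -, rfl⟩ := exists_parabolicCoxeter_erase_of_swap_mul hxy hv hlt
    exact ⟨B.erase a, (erase_subset a B).trans hBA, rfl⟩

theorem bruhatLE_parabolicCoxeter_iff :
    BruhatLE (parabolicCoxeter A) (parabolicCoxeter B) ↔ A ⊆ B := by
  refine ⟨fun h => ?_, bruhatLE_parabolicCoxeter_of_subset⟩
  obtain ⟨C, hCB, hC⟩ := exists_subset_of_bruhatLE_parabolicCoxeter h
  exact parabolicCoxeter_injective hC ▸ hCB

theorem eq_parabolicCoxeter_univ {c : Perm (Fin (n + 1))} (hc0 : (c 0 : ℕ) = n)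
    (hc : ∀ i : Fin (n + 1), i ≠ 0 → (c i : ℕ) = (i : ℕ) - 1) :
    c = parabolicCoxeter univ := by
  ext i
  rw [val_parabolicCoxeter_apply, Fin.map_valEmbedding_univ]
  cases i using Fin.cases with
  | zero => exact hc0.trans (nextGap_eq_iff.2 ⟨by simp, by simp, by simp⟩).symm
  | succ k => simp [hc k.succ (Fin.succ_ne_zero k), blockRotate_succ_of_mem]

end ParabolicCoxeter

/-- for the Coxeter element `c = (n, 0, 1, …, n-1) ∈ S_{n+1}` (in one-line
notation), the Bruhat interval `[id, c]` is isomorphic as a poset to the Boolean lattice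
of subsets of an `n`-element set. -/
theorem interval_below_coxeter_is_boolean (n : ℕ) (c : Equiv.Perm (Fin (n + 1)))
    (hc0 : (c 0 : ℕ) = n) (hc : ∀ i : Fin (n + 1), i ≠ 0 → (c i : ℕ) = (i : ℕ) - 1) :
    ∃ e : Finset (Fin n) ≃ {z : Equiv.Perm (Fin (n + 1)) // BruhatLE 1 z ∧ BruhatLE z c},
      ∀ A B : Finset (Fin n), A ⊆ B ↔ BruhatLE (e A : Equiv.Perm (Fin (n + 1))) (e B) := by
  obtain rfl := eq_parabolicCoxeter_univ hc0 hc
  let e : Finset (Fin n) → {z // BruhatLE 1 z ∧ BruhatLE z (parabolicCoxeter univ)} := fun A =>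
    ⟨parabolicCoxeter A, parabolicCoxeter_empty (n := n) ▸ bruhatLE_parabolicCoxeter_of_subset
      (empty_subset A), bruhatLE_parabolicCoxeter_of_subset (subset_univ A)⟩
  have he : Function.Bijective e := by
    refine ⟨fun A B h => parabolicCoxeter_injective (congrArg Subtype.val h), ?_⟩
    rintro ⟨u, -, hu⟩
    obtain ⟨B, -, rfl⟩ := exists_subset_of_bruhatLE_parabolicCoxeter hu
    exact ⟨B, rfl⟩
  exact ⟨.ofBijective e he, fun A B => bruhatLE_parabolicCoxeter_iff.symm⟩
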